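/- Let f = 1/√5, h = 1/(2√5), k = (5−√5)/10, r = (5−√5)/20, and let X* be the real symmetric 7×7 matrix (indexed 0,1,…,6) with X*_{00} = 1; X*_{0i} = X*_{ii} given by (f, f, f, h, f, h) for i = 1,…,6; off-diagonal entries X*_{12} = X*_{15} = X*_{23} = k, X*_{34} = X*_{36} = X*_{45} = X*_{56} = r; and X*_{ij} = 0 for all remaining pairs of distinct i, j ∈ {1,…,6}, namely {1,3},{1,4},{1,6},{2,4},{2,5},{2,6},{3,5},{4,6}. Then X* is positive semidefinite, it is primal feasible for the Lovász theta SDP of the graph G₆, and its objective value is ∑_{i=1}^6 X*_{ii} = √5. -/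

import Mathlib

/-- Adjacency in the graph `G₆` on the vertex set `{1, …, 6}` with edge set
`{ {1,3}, {1,4}, {1,6}, {2,4}, {2,5}, {2,6}, {3,5}, {4,6} }`. -/
def g6Adj (i j : ℕ) : Prop :=
  (i, j) ∈ [(1, 3), (1, 4), (1, 6), (2, 4), (2, 5), (2, 6), (3, 5), (4, 6)] ∨
    (j, i) ∈ [(1, 3), (1, 4), (1, 6), (2, 4), (2, 5), (2, 6), (3, 5), (4, 6)]

/-- The explicit primal optimal solution `X*` of the Lovász theta SDP of `G₆`, with
`f = 1/√5`, `h = 1/(2√5)`, `k = (5 - √5)/10` and `r = (5 - √5)/20`. -/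
noncomputable def g6Xstar : Matrix (Fin 7) (Fin 7) ℝ :=
  let f : ℝ := 1 / Real.sqrt 5
  let h : ℝ := 1 / (2 * Real.sqrt 5)
  let k : ℝ := (5 - Real.sqrt 5) / 10
  let r : ℝ := (5 - Real.sqrt 5) / 20
  !![1, f, f, f, h, f, h;
     f, f, k, 0, 0, k, 0;
     f, k, f, k, 0, 0, 0;
     f, 0, k, f, r, 0, r;
     h, 0, 0, r, h, r, 0;
     f, k, 0, 0, r, f, r;
     h, 0, 0, r, 0, r, h]

/-!
The quadratic form of `X*` is a nonnegative combination of four squares. The first,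
`(x₀ + ∑ᵢ X*₀ᵢ xᵢ)²`, absorbs the row and column of index `0` (as `X*₀₀ = 1`); what remains is the
Schur complement of that entry, which has rank `3` and is a combination of three squares with
weights `(√5 - 1)/5`, `√5/10`, `√5/20`, all nonnegative. Feasibility and the objective value are
direct entry checks, the latter being `4/√5 + 2/(2√5) = √5`.
-/

open scoped Matrix

theorem g6Xstar_isHermitian : g6Xstar.IsHermitian := by
  ext i j
  fin_cases i <;> fin_cases j <;> rfl

theorem dotProduct_g6Xstar_mulVec (x : Fin 7 → ℝ) :
    x ⬝ᵥ (g6Xstar *ᵥ x) =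
      (x 0 + √5 / 5 * (x 1 + x 2 + x 3 + x 5) + √5 / 10 * (x 4 + x 6)) ^ 2
      + (√5 - 1) / 5 *
          (x 1 + (√5 - 1) / 4 * (x 2 + x 5) - (1 + √5) / 4 * x 3 - (1 + √5) / 8 * (x 4 + x 6)) ^ 2
      + √5 / 10 * (x 2 + (√5 - 1) / 2 * x 3 + (1 - √5) / 4 * (x 4 + x 6) - x 5) ^ 2
      + √5 / 20 * (x 4 - x 6) ^ 2 := by
  have hsq : √5 ^ 2 = 5 := Real.sq_sqrt (by norm_num)
  have hne : √5 ≠ 0 := by positivity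
  simp only [g6Xstar, dotProduct, Matrix.mulVec, Fin.sum_univ_seven, Matrix.of_apply,
    Matrix.cons_val, one_div, mul_inv_rev]
  grind

theorem g6Xstar_posSemidef : g6Xstar.PosSemidef := by
  refine .of_dotProduct_mulVec_nonneg g6Xstar_isHermitian fun x => ?_
  have hone : 1 ≤ √5 := Real.one_le_sqrt.mpr (by norm_num)
  have hweight : 0 ≤ (√5 - 1) / 5 := by linarith
  rw [star_trivial, dotProduct_g6Xstar_mulVec]
  positivity

theorem g6Xstar_diag_eq_row_zero (i : Fin 7) (hi : i.val ≠ 0) : g6Xstar i i = g6Xstar 0 i := by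
  fin_cases i <;> simp_all [g6Xstar]

theorem g6Xstar_eq_zero_of_g6Adj (i j : Fin 7) (hij : g6Adj i.val j.val) : g6Xstar i j = 0 := by
  fin_cases i <;> fin_cases j <;> simp_all [g6Adj, g6Xstar]

theorem sum_g6Xstar_diag_succ : ∑ i : Fin 6, g6Xstar i.succ i.succ = √5 := by
  rw [Fin.sum_univ_six]
  change 1 / √5 + 1 / √5 + 1 / √5 + 1 / (2 * √5) + 1 / √5 + 1 / (2 * √5) = √5
  field_simp
  norm_num

theorem g6Xstar_primal_feasible_objective :
    g6Xstar.PosSemidef ∧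
    g6Xstar 0 0 = 1 ∧
    (∀ i : Fin 7, i.val ≠ 0 → g6Xstar i i = g6Xstar 0 i) ∧
    (∀ i j : Fin 7, i.val ≠ 0 → j.val ≠ 0 → g6Adj i.val j.val → g6Xstar i j = 0) ∧
    ∑ i : Fin 6, g6Xstar i.succ i.succ = Real.sqrt 5 :=
  ⟨g6Xstar_posSemidef, rfl, g6Xstar_diag_eq_row_zero,
    fun i j _ _ => g6Xstar_eq_zero_of_g6Adj i j, sum_g6Xstar_diag_succ⟩
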